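/- Let r > 2 and α > 0. Then the inequality 2(α/r)·₃F₂(α, α+1, 3/2; 2, 2; 4/r²) > ₃F₂(α, α, 1/2; 1, 1; 4/r²) + (α²/r²)·₃F₂(α+1, α+1, 3/2; 2, 3; 4/r²) holds if and only if ∫₀^∞∫₀^∞∫₀^1 e^{−t−y} t^{α−1} y^{α−1} ((4/r)·y·w^{1/2} + w^{−1/2}) (1−w)^{−1/2} · ₀F₁(−; 2; (4/r²)tyw) dt dy dw > 2 ∫₀^∞∫₀^∞∫₀^1 e^{−t−y} t^{α−1} y^{α−1} w^{−1/2} (1−w)^{−1/2} · ₀F₁(−; 1; (4/r²)tyw) dt dy dw. -/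

import Mathlib

open scoped BigOperators

/-- The (rising) Pochhammer symbol `(a)_n` for a real number `a`. -/
noncomputable def poch (a : ℝ) (n : ℕ) : ℝ := (ascPochhammer ℝ n).eval a

/-- The generalized hypergeometric series `₃F₂(a₁,a₂,a₃; b₁,b₂; x)`. -/
noncomputable def F32 (a₁ a₂ a₃ b₁ b₂ x : ℝ) : ℝ :=
  ∑' n : ℕ, (poch a₁ n * poch a₂ n * poch a₃ n) /
      (poch b₁ n * poch b₂ n * (n.factorial : ℝ)) * x ^ n

/-- The hypergeometric series `₀F₁(-; c; x)`. -/
noncomputable def F01 (c x : ℝ) : ℝ :=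
  ∑' n : ℕ, x ^ n / (poch c n * (n.factorial : ℝ))

open MeasureTheory Real Set Filter Topology

lemma poch_zero (a : ℝ) : poch a 0 = 1 := by simp [poch]

lemma poch_succ (a : ℝ) (n : ℕ) : poch a (n + 1) = poch a n * (a + n) := by
  simp [poch, ascPochhammer_succ_eval]

lemma poch_pos {a : ℝ} (ha : 0 < a) (n : ℕ) : 0 < poch a n := by
  induction n with
  | zero => simp [poch_zero]
  | succ n ih => rw [poch_succ]; positivity

lemma poch_one (n : ℕ) : poch 1 n = n.factorial := by
  induction n with
  | zero => simp [poch_zero]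
  | succ n ih => rw [poch_succ, ih, Nat.factorial_succ]; push_cast; ring

lemma poch_two (n : ℕ) : poch 2 n = (n + 1).factorial := by
  induction n with
  | zero => simp [poch_zero]
  | succ n ih => rw [poch_succ, ih, Nat.factorial_succ (n+1)]; push_cast; ring

lemma poch_three (n : ℕ) : 2 * poch 3 n = (n + 2).factorial := by
  induction n with
  | zero => simp [poch_zero]
  | succ n ih =>
    rw [poch_succ, show n+1+2 = (n+2)+1 from by ring, Nat.factorial_succ (n+2)]
    push_cast
    linear_combination (3+(n:ℝ)) * ih

lemma poch_succ_left (a : ℝ) (n : ℕ) : poch a (n + 1) = a * poch (a + 1) n := by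
  induction n with
  | zero => simp [poch_zero, poch_succ]
  | succ n ih => rw [poch_succ, ih, poch_succ]; push_cast; ring

lemma Gamma_poch {a : ℝ} (ha : 0 < a) (n : ℕ) :
    Real.Gamma (a + n) = Real.Gamma a * poch a n := by
  induction n with
  | zero => simp [poch_zero]
  | succ n ih =>
    have h : a + (n + 1 : ℕ) = (a + n) + 1 := by push_cast; ring
    rw [h, Real.Gamma_add_one (by positivity), ih, poch_succ]; ring

section Beta
lemma betaComplexEq {a b : ℝ} (ha : 0 < a) (hb : 0 < b) :
    ∀ x ∈ Ioo (0:ℝ) 1,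
      (x:ℂ) ^ ((a:ℂ)-1) * (1-(x:ℂ)) ^ ((b:ℂ)-1) = ((x ^ (a-1) * (1-x) ^ (b-1) : ℝ) : ℂ) := by
  intro x hx
  rw [Complex.ofReal_mul, Complex.ofReal_cpow hx.1.le, Complex.ofReal_cpow (by linarith [hx.2])]
  push_cast
  ring

lemma betaIntegrable {a b : ℝ} (ha : 0 < a) (hb : 0 < b) :
    IntegrableOn (fun x => x ^ (a-1) * (1-x) ^ (b-1)) (Ioo (0:ℝ) 1) := by
  have hC := (Complex.betaIntegral_convergent (u := a) (v := b) (by simpa using ha)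
    (by simpa using hb))
  rw [intervalIntegrable_iff_integrableOn_Ioc_of_le zero_le_one] at hC
  have hC2 : IntegrableOn (fun x : ℝ => (x:ℂ) ^ ((a:ℂ)-1) * (1-(x:ℂ)) ^ ((b:ℂ)-1))
      (Ioo (0:ℝ) 1) := hC.mono_set Ioo_subset_Ioc_self
  have := hC2.re
  refine this.congr ?_
  refine (ae_restrict_iff' measurableSet_Ioo).2 (ae_of_all _ fun x hx => ?_)
  show RCLike.re ((x:ℂ) ^ ((a:ℂ)-1) * (1-(x:ℂ)) ^ ((b:ℂ)-1)) = x ^ (a-1) * (1-x) ^ (b-1)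
  rw [betaComplexEq ha hb x hx]
  simp

lemma betaEval {a b : ℝ} (ha : 0 < a) (hb : 0 < b) :
    ∫ x in Ioo (0:ℝ) 1, x ^ (a-1) * (1-x) ^ (b-1)
      = Gamma a * Gamma b / Gamma (a+b) := by
  have key : Complex.Gamma a * Complex.Gamma b
      = Complex.Gamma ((a:ℂ)+(b:ℂ)) * Complex.betaIntegral a b :=
    Complex.Gamma_mul_Gamma_eq_betaIntegral (by simpa using ha) (by simpa using hb)
  have hbeta : Complex.betaIntegral a b = ((∫ x in Ioo (0:ℝ) 1, x ^ (a-1) * (1-x) ^ (b-1) : ℝ) : ℂ) := by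
    rw [Complex.betaIntegral, intervalIntegral.integral_of_le zero_le_one,
      integral_Ioc_eq_integral_Ioo]
    rw [setIntegral_congr_fun measurableSet_Ioo (fun x hx => betaComplexEq ha hb x hx)]
    exact integral_ofReal
  have hG : Complex.Gamma ((a:ℝ)+(b:ℝ) : ℝ) = ((Gamma (a+b) : ℝ) : ℂ) := Complex.Gamma_ofReal _
  have hne : Gamma (a+b) ≠ 0 := (Real.Gamma_pos_of_pos (by linarith)).ne'
  rw [hbeta] at key
  rw [show ((a:ℂ)+(b:ℂ)) = (((a+b : ℝ)):ℂ) by push_cast; ring] at key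
  rw [Complex.Gamma_ofReal, Complex.Gamma_ofReal, Complex.Gamma_ofReal] at key
  have : (((Gamma a * Gamma b : ℝ)) : ℂ) = (((Gamma (a+b) * ∫ x in Ioo (0:ℝ) 1, x ^ (a-1) * (1-x) ^ (b-1) : ℝ)) : ℂ) := by
    push_cast; exact key
  have h2 := Complex.ofReal_injective this
  field_simp
  linarith [h2]
end Beta

section Summable

lemma tendsto_aux (a : ℝ) {b : ℝ} (hb : 0 < b) :
    Tendsto (fun n : ℕ => (a + n) / (b + n)) atTop (𝓝 1) := by
  have h1 : Tendsto (fun n : ℕ => b + (n:ℝ)) atTop atTop :=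
    tendsto_atTop_add_const_left _ _ tendsto_natCast_atTop_atTop
  have h2 : Tendsto (fun n : ℕ => (b + (n:ℝ))⁻¹) atTop (𝓝 0) := h1.inv_tendsto_atTop
  have h3 : Tendsto (fun n : ℕ => 1 + (a - b) * (b + (n:ℝ))⁻¹) atTop (𝓝 (1 + (a-b) * 0)) :=
    tendsto_const_nhds.add (tendsto_const_nhds.mul h2)
  simp only [mul_zero, add_zero] at h3
  refine h3.congr' ?_
  filter_upwards [eventually_gt_atTop 0] with n _
  have hbn : b + (n:ℝ) ≠ 0 := by positivity
  field_simp
  ring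

lemma tendsto_inv_nat : Tendsto (fun n : ℕ => ((n:ℝ) + 1)⁻¹) atTop (𝓝 0) := by
  have h1 : Tendsto (fun n : ℕ => (n:ℝ) + 1) atTop atTop :=
    tendsto_atTop_add_const_right _ _ tendsto_natCast_atTop_atTop
  exact h1.inv_tendsto_atTop

lemma summable_of_pos_ratio {f : ℕ → ℝ} (hpos : ∀ n, 0 < f n) {l : ℝ} (hl : l < 1)
    (h : Tendsto (fun n => f (n+1) / f n) atTop (𝓝 l)) : Summable f := by
  refine summable_of_ratio_test_tendsto_lt_one hl
    (Eventually.of_forall fun n => (hpos n).ne') ?_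
  refine h.congr fun n => ?_
  rw [Real.norm_of_nonneg (hpos _).le, Real.norm_of_nonneg (hpos _).le]

/-- Summability of ₃F₂-type terms for `0 ≤ x < 1`. -/
lemma summable_F32 {a b c d e x : ℝ} (ha : 0 < a) (hb : 0 < b) (hc : 0 < c)
    (hd : 0 < d) (he : 0 < e) (hx0 : 0 ≤ x) (hx1 : x < 1) :
    Summable (fun n : ℕ => poch a n * poch b n * poch c n /
      (poch d n * poch e n * n.factorial) * x ^ n) := by
  rcases eq_or_lt_of_le hx0 with h0 | hxpos
  · refine summable_of_ne_finset_zero (s := {0}) fun n hn => ?_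
    have : n ≠ 0 := by simpa using hn
    rw [← h0, zero_pow this, mul_zero]
  · have hpos : ∀ n, 0 < poch a n * poch b n * poch c n /
        (poch d n * poch e n * n.factorial) * x ^ n := by
      intro n
      have := poch_pos ha n; have := poch_pos hb n; have := poch_pos hc n
      have := poch_pos hd n; have := poch_pos he n
      have : (0:ℝ) < n.factorial := by exact_mod_cast n.factorial_pos
      positivity
    refine summable_of_pos_ratio hpos hx1 ?_
    have key : ∀ n : ℕ, (poch a (n+1) * poch b (n+1) * poch c (n+1) /
        (poch d (n+1) * poch e (n+1) * (n+1).factorial) * x ^ (n+1)) /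
        (poch a n * poch b n * poch c n / (poch d n * poch e n * n.factorial) * x ^ n)
        = ((a + n) / (d + n)) * ((b + n) / (e + n)) * ((c + n) / ((n:ℝ)+1)) * x := by
      intro n
      have h1 := poch_pos ha n; have h2 := poch_pos hb n; have h3 := poch_pos hc n
      have h4 := poch_pos hd n; have h5 := poch_pos he n
      have h6 : (0:ℝ) < n.factorial := by exact_mod_cast n.factorial_pos
      have h7 : (0:ℝ) < a + n := by positivity
      have h8 : (0:ℝ) < d + n := by positivity
      have h9 : (0:ℝ) < e + n := by positivity
      have h10 : (0:ℝ) < (n:ℝ) + 1 := by positivity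
      have hxne : x ≠ 0 := hxpos.ne'
      rw [poch_succ, poch_succ, poch_succ, poch_succ, poch_succ, Nat.factorial_succ]
      push_cast
      field_simp
      ring
    simp only [key]
    have := ((((tendsto_aux a hd).mul (tendsto_aux b he)).mul
      (tendsto_aux c one_pos)).mul tendsto_const_nhds (b := x))
    simpa using this.congr fun n => by ring_nf

end Summable

/-- Summability of layer-`y`/`t` type terms with two factorials, any `x ≥ 0`. -/
lemma summable_two {a b c x : ℝ} (ha : 0 < a) (hb : 0 < b) (hc : 0 < c) (hx0 : 0 ≤ x) :
    Summable (fun n : ℕ => poch a n * poch b n /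
      (poch c n * n.factorial * n.factorial) * x ^ n) := by
  rcases eq_or_lt_of_le hx0 with h0 | hxpos
  · refine summable_of_ne_finset_zero (s := {0}) fun n hn => ?_
    have : n ≠ 0 := by simpa using hn
    rw [← h0, zero_pow this, mul_zero]
  · have hpos : ∀ n, 0 < poch a n * poch b n /
        (poch c n * n.factorial * n.factorial) * x ^ n := by
      intro n
      have := poch_pos ha n; have := poch_pos hb n; have := poch_pos hc n
      have : (0:ℝ) < n.factorial := by exact_mod_cast n.factorial_pos
      positivity
    refine summable_of_pos_ratio hpos one_pos ?_
    have key : ∀ n : ℕ, (poch a (n+1) * poch b (n+1) /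
        (poch c (n+1) * (n+1).factorial * (n+1).factorial) * x ^ (n+1)) /
        (poch a n * poch b n / (poch c n * n.factorial * n.factorial) * x ^ n)
        = ((a + n) / (c + n)) * ((b + n) / (1 + n)) * (((n:ℝ)+1)⁻¹ * x) := by
      intro n
      have h1 := poch_pos ha n; have h2 := poch_pos hb n; have h3 := poch_pos hc n
      have h6 : (0:ℝ) < n.factorial := by exact_mod_cast n.factorial_pos
      have h7 : (0:ℝ) < a + n := by positivity
      have h8 : (0:ℝ) < c + n := by positivity
      have h10 : (0:ℝ) < (n:ℝ) + 1 := by positivity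
      have h11 : (0:ℝ) < 1 + (n:ℝ) := by positivity
      have hxne : x ≠ 0 := hxpos.ne'
      rw [poch_succ, poch_succ, poch_succ, Nat.factorial_succ]
      push_cast
      field_simp
      ring
    simp only [key]
    have := (((tendsto_aux a hc).mul (tendsto_aux b one_pos)).mul
      (tendsto_inv_nat.mul (tendsto_const_nhds : Tendsto (fun _ : ℕ => x) atTop (𝓝 x))))
    have h0 : (0:ℝ) < 1 := one_pos
    simpa using this

/-- Summability of the ₀F₁-type terms, any `x ≥ 0`. -/
lemma summable_F01 {c x : ℝ} (hc : 0 < c) (hx0 : 0 ≤ x) :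
    Summable (fun n : ℕ => x ^ n / (poch c n * n.factorial)) := by
  rcases eq_or_lt_of_le hx0 with h0 | hxpos
  · refine summable_of_ne_finset_zero (s := {0}) fun n hn => ?_
    have : n ≠ 0 := by simpa using hn
    rw [← h0, zero_pow this, zero_div]
  · have hpos : ∀ n, 0 < x ^ n / (poch c n * n.factorial) := by
      intro n
      have := poch_pos hc n
      have : (0:ℝ) < n.factorial := by exact_mod_cast n.factorial_pos
      positivity
    refine summable_of_pos_ratio hpos one_pos ?_
    have key : ∀ n : ℕ, (x ^ (n+1) / (poch c (n+1) * (n+1).factorial)) /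
        (x ^ n / (poch c n * n.factorial))
        = ((1 + n) / (c + n)) * (((n:ℝ)+1)⁻¹ * (((n:ℝ)+1)⁻¹ * x)) := by
      intro n
      have h1 := poch_pos hc n
      have h6 : (0:ℝ) < n.factorial := by exact_mod_cast n.factorial_pos
      have h8 : (0:ℝ) < c + n := by positivity
      have h10 : (0:ℝ) < (n:ℝ) + 1 := by positivity
      have hxne : x ≠ 0 := hxpos.ne'
      rw [poch_succ, Nat.factorial_succ]
      push_cast
      field_simp
      ring
    simp only [key]
    have := ((tendsto_aux 1 hc).mul
      (tendsto_inv_nat.mul (tendsto_inv_nat.mul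
        (tendsto_const_nhds : Tendsto (fun _ : ℕ => x) atTop (𝓝 x)))))
    simpa using this

-- new material
lemma poch_le {a b : ℝ} (ha : 0 < a) (hab : a ≤ b) (n : ℕ) : poch a n ≤ poch b n := by
  induction n with
  | zero => simp [poch_zero]
  | succ n ih =>
    rw [poch_succ, poch_succ]
    have h1 := poch_pos ha n
    have : (0:ℝ) < a + n := by positivity
    exact mul_le_mul ih (by linarith) this.le (poch_pos (by linarith) n).le

lemma Bval1 (n : ℕ) :
    ∫ x in Ioo (0:ℝ) 1, x ^ (((n:ℝ) + 1/2) - 1) * (1-x) ^ ((1/2:ℝ) - 1)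
      = π * poch (1/2) n / n.factorial := by
  rw [betaEval (by positivity) (by norm_num)]
  have h1 : ((n:ℝ) + 1/2) = 1/2 + n := by ring
  have h2 : ((n:ℝ) + 1/2) + 1/2 = (n:ℝ) + 1 := by ring
  rw [h2, h1, Gamma_poch (by norm_num : (0:ℝ) < 1/2), Real.Gamma_nat_eq_factorial,
    Real.Gamma_one_half_eq]
  rw [div_eq_div_iff (by positivity) (by exact_mod_cast n.factorial_pos.ne')]
  have h : Real.sqrt π * Real.sqrt π = π := Real.mul_self_sqrt pi_pos.le
  linear_combination (poch (1/2) n * (n.factorial:ℝ)) * h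

lemma Bval2 (n : ℕ) :
    ∫ x in Ioo (0:ℝ) 1, x ^ (((n:ℝ) + 3/2) - 1) * (1-x) ^ ((1/2:ℝ) - 1)
      = (π/2) * poch (3/2) n / (n+1).factorial := by
  rw [betaEval (by positivity) (by norm_num)]
  have h1 : ((n:ℝ) + 3/2) = 3/2 + n := by ring
  have h2 : ((n:ℝ) + 3/2) + 1/2 = ((n+1 : ℕ):ℝ) + 1 := by push_cast; ring
  have h3 : Real.Gamma (3/2) = Real.sqrt π / 2 := by
    have : (3/2 : ℝ) = 1/2 + 1 := by norm_num
    rw [this, Real.Gamma_add_one (by norm_num), Real.Gamma_one_half_eq]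
    ring
  rw [h2, h1, Gamma_poch (by norm_num : (0:ℝ) < 3/2), Real.Gamma_nat_eq_factorial,
    Real.Gamma_one_half_eq, h3]
  rw [div_eq_div_iff (by exact_mod_cast (n+1).factorial_pos.ne') (by exact_mod_cast (n+1).factorial_pos.ne')]
  have h : Real.sqrt π * Real.sqrt π = π := Real.mul_self_sqrt pi_pos.le
  linear_combination (poch (3/2) n * ((n+1).factorial:ℝ) / 2) * h

lemma step_w {c : ℝ} (hc : 0 < c) {K A X : ℝ} (hK : 0 ≤ K) (hA : 0 ≤ A) (hX : 0 ≤ X) :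
    ∫ w in Ioo (0:ℝ) 1, K * ((A * w + 1) * w ^ (-(1:ℝ)/2)) * (1-w) ^ (-(1:ℝ)/2)
        * F01 c (X * w)
      = ∑' n : ℕ, K * (X ^ n / (poch c n * n.factorial)) *
          (π * poch (1/2) n / n.factorial + A * ((π/2) * poch (3/2) n / (n+1).factorial)) := by
  set F : ℕ → ℝ → ℝ := fun n w => K * (X ^ n / (poch c n * n.factorial)) *
    (w ^ (((n:ℝ) + 1/2) - 1) * (1-w) ^ ((1/2:ℝ) - 1)
      + A * (w ^ (((n:ℝ) + 3/2) - 1) * (1-w) ^ ((1/2:ℝ) - 1))) with hF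
  have hfac : ∀ n : ℕ, (0:ℝ) < n.factorial := fun n => by exact_mod_cast n.factorial_pos
  have hInt : ∀ n, IntegrableOn (F n) (Ioo (0:ℝ) 1) := by
    intro n
    exact ((betaIntegrable (by positivity) (by norm_num)).add
      ((betaIntegrable (by positivity) (by norm_num)).const_mul A)).const_mul _
  have hval : ∀ n, ∫ w in Ioo (0:ℝ) 1, F n w
      = K * (X ^ n / (poch c n * n.factorial)) *
          (π * poch (1/2) n / n.factorial + A * ((π/2) * poch (3/2) n / (n+1).factorial)) := by
    intro n
    rw [hF]
    simp only
    rw [integral_const_mul, integral_add (betaIntegrable (by positivity) (by norm_num))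
      ((betaIntegrable (by positivity) (by norm_num)).const_mul A),
      integral_const_mul, Bval1, Bval2]
  have hnonneg : ∀ n, ∀ w ∈ Ioo (0:ℝ) 1, 0 ≤ F n w := by
    intro n w hw
    have h1 : (0:ℝ) < w := hw.1
    have h2 : (0:ℝ) < 1 - w := by linarith [hw.2]
    have := poch_pos hc n
    positivity
  have hnormval : ∀ n, ∫ w in Ioo (0:ℝ) 1, ‖F n w‖
      = K * (X ^ n / (poch c n * n.factorial)) *
          (π * poch (1/2) n / n.factorial + A * ((π/2) * poch (3/2) n / (n+1).factorial)) := by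
    intro n
    rw [setIntegral_congr_fun measurableSet_Ioo
      (fun w hw => Real.norm_of_nonneg (hnonneg n w hw)), hval]
  have hsum : Summable fun n => ∫ w in Ioo (0:ℝ) 1, ‖F n w‖ := by
    refine Summable.of_nonneg_of_le (fun n => ?_) (fun n => ?_)
      (((summable_F01 hc hX).mul_left (K * (π + A * (π/2)))))
    · rw [hnormval]
      have := poch_pos hc n
      have h12 := poch_pos (show (0:ℝ) < 1/2 by norm_num) n
      have h32 := poch_pos (show (0:ℝ) < 3/2 by norm_num) n
      have := hfac n
      have := hfac (n+1)
      positivity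
    · rw [hnormval]
      have hp := poch_pos hc n
      have h12 := poch_pos (show (0:ℝ) < 1/2 by norm_num) n
      have h32 := poch_pos (show (0:ℝ) < 3/2 by norm_num) n
      have hb1 : π * poch (1/2) n / n.factorial ≤ π := by
        rw [div_le_iff₀ (hfac n)]
        have := poch_le (show (0:ℝ) < 1/2 by norm_num) (show (1/2:ℝ) ≤ 1 by norm_num) n
        rw [poch_one] at this
        nlinarith [pi_pos]
      have hb2 : (π/2) * poch (3/2) n / (n+1).factorial ≤ π/2 := by
        rw [div_le_iff₀ (hfac (n+1))]
        have := poch_le (show (0:ℝ) < 3/2 by norm_num) (show (3/2:ℝ) ≤ 2 by norm_num) n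
        rw [poch_two] at this
        nlinarith [pi_pos]
      have hterm : (0:ℝ) ≤ X ^ n / (poch c n * n.factorial) := by positivity
      calc K * (X ^ n / (poch c n * n.factorial)) *
            (π * poch (1/2) n / n.factorial + A * ((π/2) * poch (3/2) n / (n+1).factorial))
          ≤ K * (X ^ n / (poch c n * n.factorial)) * (π + A * (π/2)) := by
            have h2 : A * ((π/2) * poch (3/2) n / (n+1).factorial) ≤ A * (π/2) :=
              mul_le_mul_of_nonneg_left hb2 hA
            have hKt : 0 ≤ K * (X ^ n / (poch c n * n.factorial)) := by positivity
            exact mul_le_mul_of_nonneg_left (by linarith) hKt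
        _ = K * (π + A * (π/2)) * (X ^ n / (poch c n * n.factorial)) := by ring
  have hpt : ∀ w ∈ Ioo (0:ℝ) 1,
      K * ((A * w + 1) * w ^ (-(1:ℝ)/2)) * (1-w) ^ (-(1:ℝ)/2) * F01 c (X * w)
        = ∑' n, F n w := by
    intro w hw
    have hw0 : (0:ℝ) < w := hw.1
    rw [F01, ← tsum_mul_left]
    refine tsum_congr fun n => ?_
    have e1 : w ^ (((n:ℝ) + 1/2) - 1) = w ^ (n:ℕ) * w ^ (-(1:ℝ)/2) := by
      rw [show (((n:ℝ) + 1/2) - 1) = (n:ℝ) + (-(1:ℝ)/2) by ring, Real.rpow_add hw0,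
        Real.rpow_natCast]
    have e2 : w ^ (((n:ℝ) + 3/2) - 1) = w ^ (n:ℕ) * w ^ (-(1:ℝ)/2) * w := by
      rw [show (((n:ℝ) + 3/2) - 1) = (n:ℝ) + (-(1:ℝ)/2) + 1 by ring, Real.rpow_add hw0,
        Real.rpow_add hw0, Real.rpow_natCast, Real.rpow_one]
    have e3 : (1-w) ^ ((1/2:ℝ) - 1) = (1-w) ^ (-(1:ℝ)/2) := by norm_num
    rw [hF]
    simp only
    rw [e1, e2, e3, mul_pow]
    ring
  calc ∫ w in Ioo (0:ℝ) 1, K * ((A * w + 1) * w ^ (-(1:ℝ)/2)) * (1-w) ^ (-(1:ℝ)/2)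
          * F01 c (X * w)
      = ∫ w in Ioo (0:ℝ) 1, ∑' n, F n w :=
        setIntegral_congr_fun measurableSet_Ioo fun w hw => hpt w hw
    _ = ∑' n, ∫ w in Ioo (0:ℝ) 1, F n w :=
        (integral_tsum_of_summable_integral_norm hInt hsum).symm
    _ = _ := tsum_congr hval

lemma step_y {c a α S t : ℝ} (hc : 0 < c) (ha : 0 ≤ a) (hα : 0 < α) (hS : 0 ≤ S) (ht : 0 < t) :
    ∫ y in Ioi (0:ℝ), ∑' n : ℕ,
        (Real.exp (-t-y) * t^(α-1) * y^(α-1)) * ((S*t*y) ^ n / (poch c n * n.factorial)) *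
          (π * poch (1/2) n / n.factorial + (a*y) * ((π/2) * poch (3/2) n / (n+1).factorial))
      = ∑' n : ℕ, (Real.exp (-t) * t^(α-1)) * ((S*t) ^ n / (poch c n * n.factorial)) *
          (Real.Gamma (α+n) * (π * poch (1/2) n / n.factorial)
            + a * Real.Gamma (α+n+1) * ((π/2) * poch (3/2) n / (n+1).factorial)) := by
  have hfac : ∀ n : ℕ, (0:ℝ) < n.factorial := fun n => by exact_mod_cast n.factorial_pos
  set B1 : ℕ → ℝ := fun n => π * poch (1/2) n / n.factorial with hB1
  set B2 : ℕ → ℝ := fun n => (π/2) * poch (3/2) n / (n+1).factorial with hB2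
  have hB1pos : ∀ n, 0 < B1 n := fun n => by
    have := poch_pos (show (0:ℝ) < 1/2 by norm_num) n
    have := hfac n
    positivity
  have hB2pos : ∀ n, 0 < B2 n := fun n => by
    have := poch_pos (show (0:ℝ) < 3/2 by norm_num) n
    have := hfac (n+1)
    positivity
  set G : ℕ → ℝ → ℝ := fun n y =>
    (Real.exp (-t) * t^(α-1) * ((S*t) ^ n / (poch c n * n.factorial))) *
      (B1 n * (Real.exp (-y) * y ^ ((α+(n:ℝ)) - 1))
        + (a * B2 n) * (Real.exp (-y) * y ^ ((α+(n:ℝ)+1) - 1))) with hG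
  have hα1 : ∀ n : ℕ, (0:ℝ) < α + n := fun n => by positivity
  have hα2 : ∀ n : ℕ, (0:ℝ) < α + n + 1 := fun n => by positivity
  have hInt : ∀ n, IntegrableOn (G n) (Ioi (0:ℝ)) := by
    intro n
    exact (((Real.GammaIntegral_convergent (hα1 n)).const_mul (B1 n)).add
      ((Real.GammaIntegral_convergent (hα2 n)).const_mul (a * B2 n))).const_mul _
  have hval : ∀ n, ∫ y in Ioi (0:ℝ), G n y
      = (Real.exp (-t) * t^(α-1)) * ((S*t) ^ n / (poch c n * n.factorial)) *
          (Real.Gamma (α+n) * B1 n + a * Real.Gamma (α+n+1) * B2 n) := by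
    intro n
    rw [hG]
    simp only
    rw [integral_const_mul, integral_add ((Real.GammaIntegral_convergent (hα1 n)).const_mul (B1 n))
      ((Real.GammaIntegral_convergent (hα2 n)).const_mul (a * B2 n)),
      integral_const_mul, integral_const_mul, ← Real.Gamma_eq_integral (hα1 n),
      ← Real.Gamma_eq_integral (hα2 n)]
    ring
  have hnonneg : ∀ n, ∀ y ∈ Ioi (0:ℝ), 0 ≤ G n y := by
    intro n y hy
    have hy0 : (0:ℝ) < y := hy
    have := hB1pos n
    have := hB2pos n
    have := poch_pos hc n
    have := hfac n
    positivity
  have hnormval : ∀ n, ∫ y in Ioi (0:ℝ), ‖G n y‖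
      = (Real.exp (-t) * t^(α-1)) * ((S*t) ^ n / (poch c n * n.factorial)) *
          (Real.Gamma (α+n) * B1 n + a * Real.Gamma (α+n+1) * B2 n) := by
    intro n
    rw [setIntegral_congr_fun measurableSet_Ioi
      (fun y hy => Real.norm_of_nonneg (hnonneg n y hy)), hval]
  have hsum : Summable fun n => ∫ y in Ioi (0:ℝ), ‖G n y‖ := by
    have hs1 := (summable_two hα (show (0:ℝ) < 1/2 by norm_num) hc
      (show (0:ℝ) ≤ S*t by positivity)).mul_left
        (Real.exp (-t) * t^(α-1) * π * Real.Gamma α)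
    have hs2 := (summable_two (show (0:ℝ) < α+1 by linarith) (show (0:ℝ) < 3/2 by norm_num) hc
      (show (0:ℝ) ≤ S*t by positivity)).mul_left
        (Real.exp (-t) * t^(α-1) * (π/2) * Real.Gamma (α+1) * a)
    refine Summable.of_nonneg_of_le (fun n => ?_) (fun n => ?_) (hs1.add hs2)
    · rw [hnormval]
      have := hB1pos n
      have := hB2pos n
      have := poch_pos hc n
      have := hfac n
      have := Real.Gamma_pos_of_pos (hα1 n)
      have := Real.Gamma_pos_of_pos (hα2 n)
      positivity
    · rw [hnormval]
      have e1 : Real.Gamma (α+(n:ℝ)) = Real.Gamma α * poch α n := Gamma_poch hα n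
      have e2 : Real.Gamma (α+(n:ℝ)+1) = Real.Gamma (α+1) * poch (α+1) n := by
        rw [show α+(n:ℝ)+1 = (α+1)+(n:ℝ) by ring, Gamma_poch (by linarith) n]
      rw [e1, e2, hB1, hB2]
      simp only
      have hGα := Real.Gamma_pos_of_pos hα
      have hGα1 := Real.Gamma_pos_of_pos (show (0:ℝ) < α+1 by linarith)
      have hpα := poch_pos hα n
      have hpα1 := poch_pos (show (0:ℝ) < α+1 by linarith) n
      have hp12 := poch_pos (show (0:ℝ) < 1/2 by norm_num) n
      have hp32 := poch_pos (show (0:ℝ) < 3/2 by norm_num) n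
      have hpc := poch_pos hc n
      have hfn := hfac n
      have hfn1 := hfac (n+1)
      have hflee : ((n.factorial : ℕ) : ℝ) ≤ ((n+1).factorial : ℕ) := by
        exact_mod_cast Nat.factorial_le (Nat.le_succ n)
      have step1 : (Real.exp (-t) * t^(α-1)) * ((S*t) ^ n / (poch c n * n.factorial)) *
            (Real.Gamma α * poch α n * (π * poch (1/2) n / n.factorial)
              + a * (Real.Gamma (α+1) * poch (α+1) n) * ((π/2) * poch (3/2) n / (n+1).factorial))
          ≤ (Real.exp (-t) * t^(α-1)) * ((S*t) ^ n / (poch c n * n.factorial)) *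
            (Real.Gamma α * poch α n * (π * poch (1/2) n / n.factorial)
              + a * (Real.Gamma (α+1) * poch (α+1) n) * ((π/2) * poch (3/2) n / n.factorial)) := by
        gcongr <;> positivity
      refine le_trans (le_of_eq (by ring)) (le_trans step1 (le_of_eq ?_))
      field_simp
  have hpt : ∀ y ∈ Ioi (0:ℝ),
      (∑' n : ℕ, (Real.exp (-t-y) * t^(α-1) * y^(α-1)) * ((S*t*y) ^ n / (poch c n * n.factorial)) *
          (π * poch (1/2) n / n.factorial + (a*y) * ((π/2) * poch (3/2) n / (n+1).factorial)))
        = ∑' n, G n y := by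
    intro y hy
    have hy0 : (0:ℝ) < y := hy
    refine tsum_congr fun n => ?_
    rw [hG]
    simp only
    have e0 : Real.exp (-t-y) = Real.exp (-t) * Real.exp (-y) := by
      rw [← Real.exp_add]; ring_nf
    have e3 : y ^ ((α+(n:ℝ)) - 1) = y ^ (α-1) * y ^ (n:ℕ) := by
      rw [show (α+(n:ℝ)) - 1 = (α-1) + (n:ℝ) by ring, Real.rpow_add hy0, Real.rpow_natCast]
    have e4 : y ^ ((α+(n:ℝ)+1) - 1) = y ^ (α-1) * y ^ (n:ℕ) * y := by
      rw [show (α+(n:ℝ)+1) - 1 = (α-1) + (n:ℝ) + 1 by ring, Real.rpow_add hy0,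
        Real.rpow_add hy0, Real.rpow_natCast, Real.rpow_one]
    rw [e0, e3, e4, show S*t*y = (S*t)*y by ring, mul_pow]
    ring
  calc ∫ y in Ioi (0:ℝ), ∑' n : ℕ,
        (Real.exp (-t-y) * t^(α-1) * y^(α-1)) * ((S*t*y) ^ n / (poch c n * n.factorial)) *
          (π * poch (1/2) n / n.factorial + (a*y) * ((π/2) * poch (3/2) n / (n+1).factorial))
      = ∫ y in Ioi (0:ℝ), ∑' n, G n y :=
        setIntegral_congr_fun measurableSet_Ioi fun y hy => hpt y hy
    _ = ∑' n, ∫ y in Ioi (0:ℝ), G n y :=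
        (integral_tsum_of_summable_integral_norm hInt hsum).symm
    _ = _ := tsum_congr hval

lemma step_t {c a α S : ℝ} (hc : 0 < c) (ha : 0 ≤ a) (hα : 0 < α) (hS : 0 ≤ S) (hS1 : S < 1) :
    ∫ t in Ioi (0:ℝ), ∑' n : ℕ,
        (Real.exp (-t) * t^(α-1)) * ((S*t) ^ n / (poch c n * n.factorial)) *
          (Real.Gamma (α+n) * (π * poch (1/2) n / n.factorial)
            + a * Real.Gamma (α+n+1) * ((π/2) * poch (3/2) n / (n+1).factorial))
      = ∑' n : ℕ, S ^ n / (poch c n * n.factorial) *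
          (Real.Gamma (α+n)^2 * (π * poch (1/2) n / n.factorial)
            + a * Real.Gamma (α+n) * Real.Gamma (α+n+1)
              * ((π/2) * poch (3/2) n / (n+1).factorial)) := by
  have hfac : ∀ n : ℕ, (0:ℝ) < n.factorial := fun n => by exact_mod_cast n.factorial_pos
  set B1 : ℕ → ℝ := fun n => π * poch (1/2) n / n.factorial with hB1
  set B2 : ℕ → ℝ := fun n => (π/2) * poch (3/2) n / (n+1).factorial with hB2
  have hB1pos : ∀ n, 0 < B1 n := fun n => by
    have := poch_pos (show (0:ℝ) < 1/2 by norm_num) n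
    have := hfac n
    positivity
  have hB2pos : ∀ n, 0 < B2 n := fun n => by
    have := poch_pos (show (0:ℝ) < 3/2 by norm_num) n
    have := hfac (n+1)
    positivity
  have hα1 : ∀ n : ℕ, (0:ℝ) < α + n := fun n => by positivity
  have hα2 : ∀ n : ℕ, (0:ℝ) < α + n + 1 := fun n => by positivity
  set H : ℕ → ℝ → ℝ := fun n t =>
    ((S ^ n / (poch c n * n.factorial)) *
      (Real.Gamma (α+n) * B1 n + a * Real.Gamma (α+n+1) * B2 n)) *
        (Real.exp (-t) * t ^ ((α+(n:ℝ)) - 1)) with hH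
  have hInt : ∀ n, IntegrableOn (H n) (Ioi (0:ℝ)) := by
    intro n
    exact (Real.GammaIntegral_convergent (hα1 n)).const_mul _
  have hval : ∀ n, ∫ t in Ioi (0:ℝ), H n t
      = S ^ n / (poch c n * n.factorial) *
          (Real.Gamma (α+n)^2 * B1 n
            + a * Real.Gamma (α+n) * Real.Gamma (α+n+1) * B2 n) := by
    intro n
    rw [hH]
    simp only
    rw [integral_const_mul, ← Real.Gamma_eq_integral (hα1 n)]
    ring
  have hnonneg : ∀ n, ∀ t ∈ Ioi (0:ℝ), 0 ≤ H n t := by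
    intro n t ht
    have ht0 : (0:ℝ) < t := ht
    have := hB1pos n
    have := hB2pos n
    have := poch_pos hc n
    have := hfac n
    have := Real.Gamma_pos_of_pos (hα1 n)
    have := Real.Gamma_pos_of_pos (hα2 n)
    positivity
  have hnormval : ∀ n, ∫ t in Ioi (0:ℝ), ‖H n t‖
      = S ^ n / (poch c n * n.factorial) *
          (Real.Gamma (α+n)^2 * B1 n
            + a * Real.Gamma (α+n) * Real.Gamma (α+n+1) * B2 n) := by
    intro n
    rw [setIntegral_congr_fun measurableSet_Ioi
      (fun t ht => Real.norm_of_nonneg (hnonneg n t ht)), hval]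
  have hsum : Summable fun n => ∫ t in Ioi (0:ℝ), ‖H n t‖ := by
    have hs1 := (summable_F32 hα hα (show (0:ℝ) < 1/2 by norm_num) hc one_pos hS hS1).mul_left
      (π * Real.Gamma α ^ 2)
    have hs2 := (summable_F32 hα (show (0:ℝ) < α+1 by linarith)
      (show (0:ℝ) < 3/2 by norm_num) hc two_pos hS hS1).mul_left
        (a * Real.Gamma α * Real.Gamma (α+1) * (π/2))
    refine (hs1.add hs2).congr fun n => ?_
    rw [hnormval]
    have e1 : Real.Gamma (α+(n:ℝ)) = Real.Gamma α * poch α n := Gamma_poch hα n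
    have e2 : Real.Gamma (α+(n:ℝ)+1) = Real.Gamma (α+1) * poch (α+1) n := by
      rw [show α+(n:ℝ)+1 = (α+1)+(n:ℝ) by ring, Gamma_poch (by linarith) n]
    rw [e1, e2, hB1, hB2]
    simp only
    rw [poch_one, poch_two]
    have hpc := poch_pos hc n
    have hfn := hfac n
    have hfn1 := hfac (n+1)
    field_simp
  have hpt : ∀ t ∈ Ioi (0:ℝ),
      (∑' n : ℕ, (Real.exp (-t) * t^(α-1)) * ((S*t) ^ n / (poch c n * n.factorial)) *
          (Real.Gamma (α+n) * (π * poch (1/2) n / n.factorial)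
            + a * Real.Gamma (α+n+1) * ((π/2) * poch (3/2) n / (n+1).factorial)))
        = ∑' n, H n t := by
    intro t ht
    have ht0 : (0:ℝ) < t := ht
    refine tsum_congr fun n => ?_
    rw [hH]
    simp only
    have e3 : t ^ ((α+(n:ℝ)) - 1) = t ^ (α-1) * t ^ (n:ℕ) := by
      rw [show (α+(n:ℝ)) - 1 = (α-1) + (n:ℝ) by ring, Real.rpow_add ht0, Real.rpow_natCast]
    rw [e3, mul_pow]
    ring
  calc ∫ t in Ioi (0:ℝ), ∑' n : ℕ,
        (Real.exp (-t) * t^(α-1)) * ((S*t) ^ n / (poch c n * n.factorial)) *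
          (Real.Gamma (α+n) * (π * poch (1/2) n / n.factorial)
            + a * Real.Gamma (α+n+1) * ((π/2) * poch (3/2) n / (n+1).factorial))
      = ∫ t in Ioi (0:ℝ), ∑' n, H n t :=
        setIntegral_congr_fun measurableSet_Ioi fun t ht => hpt t ht
    _ = ∑' n, ∫ t in Ioi (0:ℝ), H n t :=
        (integral_tsum_of_summable_integral_norm hInt hsum).symm
    _ = _ := tsum_congr hval

lemma main_integral {r α c a : ℝ} (hr : 2 < r) (hα : 0 < α) (hc : 0 < c) (ha : 0 ≤ a) :
    (∫ t in Ioi (0:ℝ), ∫ y in Ioi (0:ℝ), ∫ w in Ioo (0:ℝ) 1,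
      Real.exp (-t-y) * t^(α-1) * y^(α-1) * ((a*y*w + 1) * w ^ (-(1:ℝ)/2))
        * (1-w) ^ (-(1:ℝ)/2) * F01 c (4/r^2*t*y*w))
    = ∑' n : ℕ, (4/r^2) ^ n / (poch c n * n.factorial) *
        (Real.Gamma (α+n)^2 * (π * poch (1/2) n / n.factorial)
          + a * Real.Gamma (α+n) * Real.Gamma (α+n+1)
            * ((π/2) * poch (3/2) n / (n+1).factorial)) := by
  have hr0 : (0:ℝ) < r := by linarith
  have hS0 : (0:ℝ) ≤ 4/r^2 := by positivity
  have hS1 : 4/r^2 < 1 := by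
    rw [div_lt_one (by positivity)]
    nlinarith
  calc (∫ t in Ioi (0:ℝ), ∫ y in Ioi (0:ℝ), ∫ w in Ioo (0:ℝ) 1,
      Real.exp (-t-y) * t^(α-1) * y^(α-1) * ((a*y*w + 1) * w ^ (-(1:ℝ)/2))
        * (1-w) ^ (-(1:ℝ)/2) * F01 c (4/r^2*t*y*w))
      = ∫ t in Ioi (0:ℝ), ∫ y in Ioi (0:ℝ), ∑' n : ℕ,
          (Real.exp (-t-y) * t^(α-1) * y^(α-1)) * ((4/r^2*t*y) ^ n / (poch c n * n.factorial)) *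
            (π * poch (1/2) n / n.factorial + (a*y) * ((π/2) * poch (3/2) n / (n+1).factorial)) := by
        refine setIntegral_congr_fun measurableSet_Ioi fun t ht => ?_
        refine setIntegral_congr_fun measurableSet_Ioi fun y hy => ?_
        have ht0 : (0:ℝ) < t := ht
        have hy0 : (0:ℝ) < y := hy
        exact step_w hc (by positivity) (by positivity) (by positivity)
    _ = ∫ t in Ioi (0:ℝ), ∑' n : ℕ,
          (Real.exp (-t) * t^(α-1)) * ((4/r^2*t) ^ n / (poch c n * n.factorial)) *
            (Real.Gamma (α+n) * (π * poch (1/2) n / n.factorial)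
              + a * Real.Gamma (α+n+1) * ((π/2) * poch (3/2) n / (n+1).factorial)) := by
        refine setIntegral_congr_fun measurableSet_Ioi fun t ht => ?_
        exact step_y hc ha hα hS0 ht
    _ = _ := step_t hc ha hα hS0 hS1

set_option maxHeartbeats 2000000 in
/-- The criterion `2(α/r) ₃F₂(α,α+1,3/2;2,2;4/r²) > ₃F₂(α,α,1/2;1,1;4/r²) +
(α²/r²) ₃F₂(α+1,α+1,3/2;2,3;4/r²)` is equivalent to an inequality of triple integrals. -/
theorem stmt13 (r α : ℝ) (hr : 2 < r) (hα : 0 < α) :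
    (2 * (α / r) * F32 α (α + 1) (3 / 2) 2 2 (4 / r ^ 2) >
        F32 α α (1 / 2) 1 1 (4 / r ^ 2) +
          α ^ 2 / r ^ 2 * F32 (α + 1) (α + 1) (3 / 2) 2 3 (4 / r ^ 2)) ↔
      (∫ t in Set.Ioi (0 : ℝ), ∫ y in Set.Ioi (0 : ℝ), ∫ w in Set.Ioo (0 : ℝ) 1,
          Real.exp (-t - y) * t ^ (α - 1) * y ^ (α - 1) *
            (4 / r * y * w ^ ((1 : ℝ) / 2) + w ^ (-(1 : ℝ) / 2)) *
              (1 - w) ^ (-(1 : ℝ) / 2) * F01 2 (4 / r ^ 2 * t * y * w)) >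
        2 * ∫ t in Set.Ioi (0 : ℝ), ∫ y in Set.Ioi (0 : ℝ), ∫ w in Set.Ioo (0 : ℝ) 1,
          Real.exp (-t - y) * t ^ (α - 1) * y ^ (α - 1) *
            w ^ (-(1 : ℝ) / 2) * (1 - w) ^ (-(1 : ℝ) / 2) *
              F01 1 (4 / r ^ 2 * t * y * w) := by
  have hr0 : (0:ℝ) < r := by linarith
  have hS0 : (0:ℝ) ≤ 4/r^2 := by positivity
  have hS1 : 4/r^2 < 1 := by rw [div_lt_one (by positivity)]; nlinarith
  have hfac : ∀ n : ℕ, (0:ℝ) < n.factorial := fun n => by exact_mod_cast n.factorial_pos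
  have hGA := Real.Gamma_pos_of_pos hα
  have hP : (0:ℝ) < π * Real.Gamma α ^ 2 := by positivity
  -- step 1 : compute the first integral
  have hA : (∫ t in Set.Ioi (0 : ℝ), ∫ y in Set.Ioi (0 : ℝ), ∫ w in Set.Ioo (0 : ℝ) 1,
          Real.exp (-t - y) * t ^ (α - 1) * y ^ (α - 1) *
            (4 / r * y * w ^ ((1 : ℝ) / 2) + w ^ (-(1 : ℝ) / 2)) *
              (1 - w) ^ (-(1 : ℝ) / 2) * F01 2 (4 / r ^ 2 * t * y * w))
      = π * Real.Gamma α ^ 2 * (2 * (α / r) * F32 α (α + 1) (3 / 2) 2 2 (4 / r ^ 2)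
          + F32 α α (1 / 2) 1 2 (4 / r ^ 2)) := by
    have h1 : (∫ t in Set.Ioi (0 : ℝ), ∫ y in Set.Ioi (0 : ℝ), ∫ w in Set.Ioo (0 : ℝ) 1,
          Real.exp (-t - y) * t ^ (α - 1) * y ^ (α - 1) *
            (4 / r * y * w ^ ((1 : ℝ) / 2) + w ^ (-(1 : ℝ) / 2)) *
              (1 - w) ^ (-(1 : ℝ) / 2) * F01 2 (4 / r ^ 2 * t * y * w))
        = (∫ t in Ioi (0:ℝ), ∫ y in Ioi (0:ℝ), ∫ w in Ioo (0:ℝ) 1,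
          Real.exp (-t-y) * t^(α-1) * y^(α-1) * (((4/r)*y*w + 1) * w ^ (-(1:ℝ)/2))
            * (1-w) ^ (-(1:ℝ)/2) * F01 2 (4/r^2*t*y*w)) := by
      refine setIntegral_congr_fun measurableSet_Ioi fun t _ => ?_
      refine setIntegral_congr_fun measurableSet_Ioi fun y _ => ?_
      refine setIntegral_congr_fun measurableSet_Ioo fun w hw => ?_
      have hw0 : (0:ℝ) < w := hw.1
      have e : w ^ ((1:ℝ)/2) = w * w ^ (-(1:ℝ)/2) := by
        rw [show (1:ℝ)/2 = 1 + (-(1:ℝ)/2) by norm_num, Real.rpow_add hw0, Real.rpow_one]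
      rw [e]
      ring
    rw [h1, main_integral hr hα two_pos (by positivity)]
    have h2 : ∀ n : ℕ, (4/r^2) ^ n / (poch 2 n * n.factorial) *
        (Real.Gamma (α+n)^2 * (π * poch (1/2) n / n.factorial)
          + (4/r) * Real.Gamma (α+n) * Real.Gamma (α+n+1)
            * ((π/2) * poch (3/2) n / (n+1).factorial))
        = (π * Real.Gamma α ^ 2) *
            ((poch α n * poch α n * poch (1/2) n) /
              (poch 1 n * poch 2 n * n.factorial) * (4/r^2) ^ n
            + (2 * (α / r)) * ((poch α n * poch (α+1) n * poch (3/2) n) /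
              (poch 2 n * poch 2 n * n.factorial) * (4/r^2) ^ n)) := by
      intro n
      have e1 : Real.Gamma (α+(n:ℝ)) = Real.Gamma α * poch α n := Gamma_poch hα n
      have e2 : Real.Gamma (α+(n:ℝ)+1) = (α * Real.Gamma α) * poch (α+1) n := by
        rw [show α+(n:ℝ)+1 = (α+1)+(n:ℝ) by ring, Gamma_poch (by linarith) n,
          Real.Gamma_add_one hα.ne']
      rw [e1, e2, poch_one, poch_two]
      have h6 := hfac n
      have h7 := hfac (n+1)
      have h8 := poch_pos (show (0:ℝ) < 2 by norm_num) n
      rw [poch_two] at h8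
      field_simp
      ring
    rw [tsum_congr h2, tsum_mul_left]
    have hs1 : Summable (fun n : ℕ => (poch α n * poch α n * poch (1/2) n) /
        (poch 1 n * poch 2 n * n.factorial) * (4/r^2) ^ n) :=
      summable_F32 hα hα (by norm_num) one_pos two_pos hS0 hS1
    have hs2 : Summable (fun n : ℕ => (poch α n * poch (α+1) n * poch (3/2) n) /
        (poch 2 n * poch 2 n * n.factorial) * (4/r^2) ^ n) :=
      summable_F32 hα (by linarith) (by norm_num) two_pos two_pos hS0 hS1
    rw [Summable.tsum_add hs1 (hs2.mul_left _), tsum_mul_left]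
    rw [F32, F32]
    ring
  -- step 2 : compute the second integral
  have hB : (∫ t in Set.Ioi (0 : ℝ), ∫ y in Set.Ioi (0 : ℝ), ∫ w in Set.Ioo (0 : ℝ) 1,
          Real.exp (-t - y) * t ^ (α - 1) * y ^ (α - 1) *
            w ^ (-(1 : ℝ) / 2) * (1 - w) ^ (-(1 : ℝ) / 2) *
              F01 1 (4 / r ^ 2 * t * y * w))
      = π * Real.Gamma α ^ 2 * F32 α α (1 / 2) 1 1 (4 / r ^ 2) := by
    have h1 : (∫ t in Set.Ioi (0 : ℝ), ∫ y in Set.Ioi (0 : ℝ), ∫ w in Set.Ioo (0 : ℝ) 1,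
          Real.exp (-t - y) * t ^ (α - 1) * y ^ (α - 1) *
            w ^ (-(1 : ℝ) / 2) * (1 - w) ^ (-(1 : ℝ) / 2) *
              F01 1 (4 / r ^ 2 * t * y * w))
        = (∫ t in Ioi (0:ℝ), ∫ y in Ioi (0:ℝ), ∫ w in Ioo (0:ℝ) 1,
          Real.exp (-t-y) * t^(α-1) * y^(α-1) * (((0:ℝ)*y*w + 1) * w ^ (-(1:ℝ)/2))
            * (1-w) ^ (-(1:ℝ)/2) * F01 1 (4/r^2*t*y*w)) := by
      refine setIntegral_congr_fun measurableSet_Ioi fun t _ => ?_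
      refine setIntegral_congr_fun measurableSet_Ioi fun y _ => ?_
      refine setIntegral_congr_fun measurableSet_Ioo fun w hw => ?_
      ring
    rw [h1, main_integral hr hα one_pos le_rfl]
    have h2 : ∀ n : ℕ, (4/r^2) ^ n / (poch 1 n * n.factorial) *
        (Real.Gamma (α+n)^2 * (π * poch (1/2) n / n.factorial)
          + 0 * Real.Gamma (α+n) * Real.Gamma (α+n+1)
            * ((π/2) * poch (3/2) n / (n+1).factorial))
        = (π * Real.Gamma α ^ 2) *
            ((poch α n * poch α n * poch (1/2) n) /
              (poch 1 n * poch 1 n * n.factorial) * (4/r^2) ^ n) := by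
      intro n
      have e1 : Real.Gamma (α+(n:ℝ)) = Real.Gamma α * poch α n := Gamma_poch hα n
      rw [e1, poch_one]
      have h6 := hfac n
      field_simp
      ring
    rw [tsum_congr h2, tsum_mul_left, F32]
  -- step 3 : the contiguous-type identity
  have hG : F32 α α (1 / 2) 1 2 (4 / r ^ 2)
      = F32 α α (1 / 2) 1 1 (4 / r ^ 2)
        - α ^ 2 / r ^ 2 * F32 (α + 1) (α + 1) (3 / 2) 2 3 (4 / r ^ 2) := by
    have hs2 : Summable (fun n : ℕ => (poch α n * poch α n * poch (1/2) n) /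
        (poch 1 n * poch 1 n * n.factorial) * (4/r^2) ^ n) :=
      summable_F32 hα hα (by norm_num) one_pos one_pos hS0 hS1
    have hsG : Summable (fun n : ℕ => (poch α n * poch α n * poch (1/2) n) /
        (poch 1 n * poch 2 n * n.factorial) * (4/r^2) ^ n) :=
      summable_F32 hα hα (by norm_num) one_pos two_pos hS0 hS1
    have hD := hs2.sub hsG
    have h1 : F32 α α (1 / 2) 1 1 (4 / r ^ 2) - F32 α α (1 / 2) 1 2 (4 / r ^ 2)
        = ∑' n : ℕ, ((poch α n * poch α n * poch (1/2) n) /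
              (poch 1 n * poch 1 n * n.factorial) * (4/r^2) ^ n
            - (poch α n * poch α n * poch (1/2) n) /
              (poch 1 n * poch 2 n * n.factorial) * (4/r^2) ^ n) := by
      rw [Summable.tsum_sub hs2 hsG, F32, F32]
    have h2 : ∑' n : ℕ, ((poch α n * poch α n * poch (1/2) n) /
              (poch 1 n * poch 1 n * n.factorial) * (4/r^2) ^ n
            - (poch α n * poch α n * poch (1/2) n) /
              (poch 1 n * poch 2 n * n.factorial) * (4/r^2) ^ n)
        = ∑' n : ℕ, (α ^ 2 / r ^ 2) * ((poch (α+1) n * poch (α+1) n * poch (3/2) n) /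
              (poch 2 n * poch 3 n * n.factorial) * (4/r^2) ^ n) := by
      rw [Summable.tsum_eq_zero_add hD]
      have hz : (poch α 0 * poch α 0 * poch (1/2) 0) /
              (poch 1 0 * poch 1 0 * (Nat.factorial 0)) * (4/r^2) ^ 0
            - (poch α 0 * poch α 0 * poch (1/2) 0) /
              (poch 1 0 * poch 2 0 * (Nat.factorial 0)) * (4/r^2) ^ 0 = 0 := by
        simp [poch_zero]
      rw [hz, zero_add]
      refine tsum_congr fun n => ?_
      rw [poch_succ_left α n, poch_succ_left (1/2) n, poch_succ_left 1 n,
        poch_succ_left 2 n]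
      norm_num
      have e3 : poch 3 n = ((n+2).factorial : ℝ) / 2 := by
        have := poch_three n; linarith
      rw [poch_two, e3]
      have hf2 : ((n+2).factorial : ℝ) = ((n:ℝ)+2) * ((n+1).factorial : ℝ) := by
        rw [show (n+2) = (n+1)+1 from rfl, Nat.factorial_succ (n+1)]
        push_cast; ring
      have hf1 : ((n+1).factorial : ℝ) = ((n:ℝ)+1) * (n.factorial : ℝ) := by
        rw [Nat.factorial_succ]; push_cast; ring
      rw [hf2, hf1]
      have h6 := hfac n
      have hn1 : (0:ℝ) < (n:ℝ)+1 := by positivity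
      have hn2 : (0:ℝ) < (n:ℝ)+2 := by positivity
      have hrne : r ≠ 0 := hr0.ne'
      field_simp
      have hr2 : r ^ 2 * r⁻¹ ^ 2 = 1 := by field_simp
      ring_nf
      linear_combination (poch (1 + α) n ^ 2 * poch (3/2) n * r⁻¹ ^ (n*2) * 4 ^ n * 4 * ((n:ℝ)+1)) * hr2
    rw [tsum_mul_left] at h2
    have : F32 α α (1 / 2) 1 1 (4 / r ^ 2) - F32 α α (1 / 2) 1 2 (4 / r ^ 2)
        = α ^ 2 / r ^ 2 * F32 (α + 1) (α + 1) (3 / 2) 2 3 (4 / r ^ 2) := by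
      rw [h1, h2, F32]
    linarith
  rw [hA, hB, hG]
  constructor
  · intro h
    have h2 : (2 * (α / r) * F32 α (α + 1) (3 / 2) 2 2 (4 / r ^ 2)
        + (F32 α α (1 / 2) 1 1 (4 / r ^ 2)
          - α ^ 2 / r ^ 2 * F32 (α + 1) (α + 1) (3 / 2) 2 3 (4 / r ^ 2)))
        > 2 * F32 α α (1 / 2) 1 1 (4 / r ^ 2) := by linarith
    calc π * Real.Gamma α ^ 2 * (2 * (α / r) * F32 α (α + 1) (3 / 2) 2 2 (4 / r ^ 2)
          + (F32 α α (1 / 2) 1 1 (4 / r ^ 2)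
            - α ^ 2 / r ^ 2 * F32 (α + 1) (α + 1) (3 / 2) 2 3 (4 / r ^ 2)))
        > π * Real.Gamma α ^ 2 * (2 * F32 α α (1 / 2) 1 1 (4 / r ^ 2)) :=
          (mul_lt_mul_iff_right₀ hP).2 h2
      _ = 2 * (π * Real.Gamma α ^ 2 * F32 α α (1 / 2) 1 1 (4 / r ^ 2)) := by ring
  · intro h
    have h2 : π * Real.Gamma α ^ 2 * (2 * F32 α α (1 / 2) 1 1 (4 / r ^ 2))
        < π * Real.Gamma α ^ 2 * (2 * (α / r) * F32 α (α + 1) (3 / 2) 2 2 (4 / r ^ 2)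
          + (F32 α α (1 / 2) 1 1 (4 / r ^ 2)
            - α ^ 2 / r ^ 2 * F32 (α + 1) (α + 1) (3 / 2) 2 3 (4 / r ^ 2))) := by
      calc π * Real.Gamma α ^ 2 * (2 * F32 α α (1 / 2) 1 1 (4 / r ^ 2))
          = 2 * (π * Real.Gamma α ^ 2 * F32 α α (1 / 2) 1 1 (4 / r ^ 2)) := by ring
        _ < _ := h
    have := (mul_lt_mul_iff_right₀ hP).1 h2
    linarith
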